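/- Fix c ≥ 0. There exist δ₀ > 0 and a constant K > 0 (depending only on c) such that the following holds for all δ ∈ (0, δ₀) and every finite P ⊂ ℝ^d: if E is a set of unordered pairs of points of P such that for every s, t ∈ P with s ≠ t there exists a pair {a, b} ∈ E with ‖s − a‖ ≤ 2δ·‖a − b‖, ‖t − b‖ ≤ 2δ·‖a − b‖, and ‖a − b‖ ≤ (1 + cδ²)·‖s − t‖, then the graph (P, E) with edge weights ‖u − v‖² is a (1 + Kδ²)-spanner of the edge-squared metric on P: for all s, t ∈ P, d₂(s,t) ≤ d_E(s,t) ≤ (1 + Kδ²)·d₂(s,t), where d_E is the shortest-path distance in (P, E). -/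

import Mathlib

open scoped BigOperators
open MeasureTheory

noncomputable section

/-- Points of `ℝ^d`. -/
abbrev Pt (d : ℕ) : Type := EuclideanSpace ℝ (Fin d)

/-- The edge-squared metric on a point set `P ⊆ ℝ^d`: the infimum over finite chains of points
of `P` from `a` to `b` of the sum of squared Euclidean lengths of the steps. -/
noncomputable def edgeSq {d : ℕ} (P : Set (Pt d)) (a b : Pt d) : ℝ :=
  sInf {c : ℝ | ∃ (k : ℕ) (p : Fin (k + 1) → Pt d), p 0 = a ∧ p (Fin.last k) = b ∧
    (∀ i, p i ∈ P) ∧ c = ∑ i : Fin k, ‖p i.succ - p i.castSucc‖ ^ 2}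


/-- Shortest-path distance in the graph whose (undirected) edges are the pairs in `E`, with edge
weights `w`. -/
noncomputable def spanDist {d : ℕ} (E : Set (Pt d × Pt d)) (w : Pt d → Pt d → ℝ)
    (a b : Pt d) : ℝ :=
  sInf {c : ℝ | ∃ (k : ℕ) (q : Fin (k + 1) → Pt d), q 0 = a ∧ q (Fin.last k) = b ∧
    (∀ i : Fin k, (q i.castSucc, q i.succ) ∈ E ∨ (q i.succ, q i.castSucc) ∈ E) ∧
    c = ∑ i : Fin k, w (q i.castSucc) (q i.succ)}

/-!
Every edge of `E` joins two points of `P`, so `d₂ ≤ d_E`. Conversely, it suffices to join each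
pair `s, t ∈ P` by an `E`-path of cost at most `(1 + Kδ²)‖s - t‖²`: an optimal edge-squared chain
is then replaced step by step. Such paths are built by induction on `‖s - t‖` over the finitely
many distances in `P`: the edge `{a, b}` serving `(s, t)` leaves detours `s → a` and `b → t`
that are strictly shorter than `s → t` and have squared lengths `O(δ²)‖a - b‖²`. With
`K = 3c + 64` the resulting recursion `(1 + 8δ²(1 + Kδ²))(1 + cδ²)² ≤ 1 + Kδ²` closes.
-/

section Chains

variable {α : Type*} (R : α → α → Prop) (w : α → α → ℝ)

def chainCosts (a b : α) : Set ℝ :=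
  {c : ℝ | ∃ (k : ℕ) (q : Fin (k + 1) → α), q 0 = a ∧ q (Fin.last k) = b ∧
    (∀ i : Fin k, R (q i.castSucc) (q i.succ)) ∧
    c = ∑ i : Fin k, w (q i.castSucc) (q i.succ)}

variable {R w} {a b c : α} {x y : ℝ}

theorem zero_mem_chainCosts (a : α) : (0 : ℝ) ∈ chainCosts R w a a :=
  ⟨0, fun _ => a, rfl, rfl, fun i => i.elim0, by simp⟩

theorem add_mem_chainCosts_of_rel (hx : x ∈ chainCosts R w a b) (h : R b c) :
    x + w b c ∈ chainCosts R w a c := by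
  obtain ⟨k, q, rfl, rfl, hR, rfl⟩ := hx
  refine ⟨k + 1, Fin.snoc q c, ?_, by simp, fun i => ?_, ?_⟩
  · exact Fin.snoc_castSucc (i := 0) ..
  · induction i using Fin.lastCases with
    | last => simpa using h
    | cast j => simpa only [Fin.succ_castSucc, Fin.snoc_castSucc] using hR j
  · simp only [Fin.sum_univ_castSucc, Fin.succ_castSucc, Fin.snoc_castSucc, Fin.succ_last,
      Fin.snoc_last]

theorem mem_chainCosts_of_rel (h : R a b) : w a b ∈ chainCosts R w a b := by
  simpa using add_mem_chainCosts_of_rel (zero_mem_chainCosts a) h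

theorem add_mem_chainCosts (hx : x ∈ chainCosts R w a b) (hy : y ∈ chainCosts R w b c) :
    x + y ∈ chainCosts R w a c := by
  obtain ⟨k, q, rfl, rfl, hR, rfl⟩ := hy
  induction k with
  | zero => simpa using hx
  | succ k ih =>
    have hinit := ih (q ∘ Fin.castSucc) hx (fun i => by simpa using hR i.castSucc)
    simpa [Fin.sum_univ_castSucc, add_assoc] using
      add_mem_chainCosts_of_rel hinit (hR (Fin.last k))

theorem exists_mem_chainCosts_le_mul {R' : α → α → Prop} {w' : α → α → ℝ} {C : ℝ}
    (hstep : ∀ u v, R' u v → ∃ x ∈ chainCosts R w u v, x ≤ C * w' u v)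
    (hy : y ∈ chainCosts R' w' a b) : ∃ x ∈ chainCosts R w a b, x ≤ C * y := by
  obtain ⟨k, q, rfl, rfl, hR, rfl⟩ := hy
  induction k with
  | zero => exact ⟨0, zero_mem_chainCosts _, by simp⟩
  | succ k ih =>
    obtain ⟨x₁, hx₁, hx₁le⟩ := ih (q ∘ Fin.castSucc) (fun i => by simpa using hR i.castSucc)
    obtain ⟨x₂, hx₂, hx₂le⟩ := hstep _ _ (hR (Fin.last k))
    refine ⟨x₁ + x₂, by simpa using add_mem_chainCosts hx₁ hx₂, ?_⟩
    rw [Fin.sum_univ_castSucc, mul_add]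
    simp only [Function.comp_apply, Fin.succ_castSucc, Fin.succ_last] at hx₁le hx₂le ⊢
    linarith

theorem sInf_chainCosts_le_mul {R' : α → α → Prop} {w' : α → α → ℝ} {C : ℝ}
    (hw : ∀ u v, 0 ≤ w u v) (hC : 0 ≤ C)
    (hstep : ∀ u v, R' u v → ∃ x ∈ chainCosts R w u v, x ≤ C * w' u v)
    (hne : (chainCosts R' w' a b).Nonempty) :
    sInf (chainCosts R w a b) ≤ C * sInf (chainCosts R' w' a b) := by
  have hbdd : BddBelow (chainCosts R w a b) := by
    refine ⟨0, ?_⟩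
    rintro _ ⟨k, q, -, -, -, rfl⟩
    exact Finset.sum_nonneg fun i _ => hw _ _
  rw [← smul_eq_mul, ← Real.sInf_smul_of_nonneg hC]
  refine le_csInf (hne.smul_set) ?_
  rintro _ ⟨y, hy, rfl⟩
  obtain ⟨x, hx, hxy⟩ := exists_mem_chainCosts_le_mul hstep hy
  exact (csInf_le hbdd hx).trans hxy

end Chains

theorem edgeSq_eq_sInf_chainCosts {d : ℕ} {P : Set (Pt d)} {s : Pt d} (hs : s ∈ P) (t : Pt d) :
    edgeSq P s t =
      sInf (chainCosts (fun u v => u ∈ P ∧ v ∈ P) (fun u v => ‖u - v‖ ^ 2) s t) := by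
  refine congrArg sInf (Set.ext fun x => ?_)
  simp only [chainCosts, Set.mem_ofPred_eq, norm_sub_rev]
  refine exists_congr fun k => exists_congr fun q => and_congr_right fun h0 => ?_
  refine and_congr_right fun _ => and_congr_left fun _ => ⟨fun h i => ⟨h _, h _⟩, fun h i => ?_⟩
  induction i using Fin.cases with
  | zero => exact h0 ▸ hs
  | succ j => exact (h j).2

theorem spanDist_eq_sInf_chainCosts {d : ℕ} (E : Set (Pt d × Pt d)) (w : Pt d → Pt d → ℝ)
    (a b : Pt d) :
    spanDist E w a b = sInf (chainCosts (fun u v => (u, v) ∈ E ∨ (v, u) ∈ E) w a b) :=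
  rfl

theorem spanner_factor_bound {c e : ℝ} (hc : 0 ≤ c) (he : 0 ≤ e) (h : (3 * c + 64) * e ≤ 1) :
    (1 + 8 * e * (1 + (3 * c + 64) * e)) * (1 + c * e) ^ 2 ≤ 1 + (3 * c + 64) * e := by
  have hce : c * e ≤ 1 := by nlinarith
  have h₁ : 1 + 8 * e * (1 + (3 * c + 64) * e) ≤ 1 + 16 * e := by nlinarith
  have h₂ : (1 + c * e) ^ 2 ≤ 1 + 3 * (c * e) := by nlinarith [mul_nonneg hc he]
  calc (1 + 8 * e * (1 + (3 * c + 64) * e)) * (1 + c * e) ^ 2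
      ≤ (1 + 16 * e) * (1 + 3 * (c * e)) := by gcongr
    _ ≤ 1 + (3 * c + 64) * e := by nlinarith [mul_nonneg hc he]

section Serves

variable {V : Type*} [NormedAddCommGroup V]

theorem exists_chainCosts_le_of_serves {P : Set V} (hP : P.Finite) {E : Set (V × V)}
    (hE : ∀ e ∈ E, e.1 ∈ P ∧ e.2 ∈ P) {c δ : ℝ} (hc : 0 ≤ c) (hδ : 0 ≤ δ)
    (hcδ : (3 * c + 64) * δ ^ 2 ≤ 1)
    (hserve : ∀ s ∈ P, ∀ t ∈ P, s ≠ t → ∃ a b : V, (a, b) ∈ E ∧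
      ‖s - a‖ ≤ 2 * δ * ‖a - b‖ ∧ ‖t - b‖ ≤ 2 * δ * ‖a - b‖ ∧
      ‖a - b‖ ≤ (1 + c * δ ^ 2) * ‖s - t‖)
    {s t : V} (hs : s ∈ P) (ht : t ∈ P) :
    ∃ x ∈ chainCosts (fun u v => (u, v) ∈ E ∨ (v, u) ∈ E) (fun u v => ‖u - v‖ ^ 2) s t,
      x ≤ (1 + (3 * c + 64) * δ ^ 2) * ‖s - t‖ ^ 2 := by
  set L := 1 + (3 * c + 64) * δ ^ 2
  have hfactor : 2 * δ * (1 + c * δ ^ 2) < 1 := by nlinarith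
  have hwf : (P ×ˢ P).WellFoundedOn (Function.onFun (· < ·) fun p : V × V => ‖p.1 - p.2‖) :=
    Set.wellFoundedOn_image.1 ((hP.prod hP).image _).wellFoundedOn
  refine hwf.induction (P := fun p => ∃ x ∈ chainCosts (fun u v => (u, v) ∈ E ∨ (v, u) ∈ E)
    (fun u v => ‖u - v‖ ^ 2) p.1 p.2, x ≤ L * ‖p.1 - p.2‖ ^ 2) (Set.mk_mem_prod hs ht) ?_
  rintro ⟨s, t⟩ ⟨hs, ht⟩ ih
  simp only [Function.onFun] at ih ⊢
  rcases eq_or_ne s t with rfl | hst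
  · exact ⟨0, zero_mem_chainCosts s, by simp⟩
  obtain ⟨a, b, hab, hsa, hbt, hab_le⟩ := hserve s hs t ht hst
  have hshrink : ∀ x, x ≤ 2 * δ * ‖a - b‖ → x < ‖s - t‖ := fun x hx =>
    calc x ≤ 2 * δ * ((1 + c * δ ^ 2) * ‖s - t‖) := hx.trans (by gcongr)
      _ = 2 * δ * (1 + c * δ ^ 2) * ‖s - t‖ := by ring
      _ < ‖s - t‖ := mul_lt_of_lt_one_left (norm_pos_iff.2 (sub_ne_zero.2 hst)) hfactor
  obtain ⟨x₁, hx₁, hx₁le⟩ := ih (s, a) ⟨hs, (hE _ hab).1⟩ (hshrink _ hsa)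
  obtain ⟨x₂, hx₂, hx₂le⟩ :=
    ih (b, t) ⟨(hE _ hab).2, ht⟩ (hshrink _ (by rwa [norm_sub_rev]))
  rw [norm_sub_rev] at hx₂le
  refine ⟨x₁ + ‖a - b‖ ^ 2 + x₂,
    add_mem_chainCosts (add_mem_chainCosts_of_rel hx₁ (Or.inl hab)) hx₂, ?_⟩
  calc x₁ + ‖a - b‖ ^ 2 + x₂
      ≤ L * (2 * δ * ‖a - b‖) ^ 2 + ‖a - b‖ ^ 2 + L * (2 * δ * ‖a - b‖) ^ 2 := by
        gcongr
        · exact hx₁le.trans (by gcongr)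
        · exact hx₂le.trans (by gcongr)
    _ = (1 + 8 * δ ^ 2 * L) * ‖a - b‖ ^ 2 := by ring
    _ ≤ (1 + 8 * δ ^ 2 * L) * ((1 + c * δ ^ 2) * ‖s - t‖) ^ 2 := by gcongr
    _ = (1 + 8 * δ ^ 2 * L) * (1 + c * δ ^ 2) ^ 2 * ‖s - t‖ ^ 2 := by ring
    _ ≤ L * ‖s - t‖ ^ 2 := by gcongr; exact spanner_factor_bound hc (sq_nonneg δ) hcδ

end Serves

/-- Fix `c ≥ 0`. There exist `δ₀ > 0` and `K > 0` (depending only on `c`)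
such that for all `δ ∈ (0, δ₀)` and every finite `P ⊆ ℝ^d`: if `E` is a set of pairs of points
of `P` such that every pair `s ≠ t` in `P` is served by some edge `{a, b} ∈ E` with
`‖s - a‖ ≤ 2δ‖a - b‖`, `‖t - b‖ ≤ 2δ‖a - b‖` and `‖a - b‖ ≤ (1 + cδ²)‖s - t‖`, then the graph
`(P, E)` with squared Euclidean edge weights is a `(1 + Kδ²)`-spanner of the edge-squared
metric on `P`. -/
theorem wspd_gives_edgeSq_spanner (c : ℝ) (hc : 0 ≤ c) :
    ∃ δ₀ > (0 : ℝ), ∃ K > (0 : ℝ), ∀ δ : ℝ, 0 < δ → δ < δ₀ →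
      ∀ (d : ℕ) (P : Set (Pt d)), P.Finite →
        ∀ E : Set (Pt d × Pt d), (∀ e ∈ E, e.1 ∈ P ∧ e.2 ∈ P) →
          (∀ s ∈ P, ∀ t ∈ P, s ≠ t → ∃ a b : Pt d, (a, b) ∈ E ∧
            ‖s - a‖ ≤ 2 * δ * ‖a - b‖ ∧ ‖t - b‖ ≤ 2 * δ * ‖a - b‖ ∧
            ‖a - b‖ ≤ (1 + c * δ ^ 2) * ‖s - t‖) →
          ∀ s ∈ P, ∀ t ∈ P,
            edgeSq P s t ≤ spanDist E (fun u v => ‖u - v‖ ^ 2) s t ∧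
            spanDist E (fun u v => ‖u - v‖ ^ 2) s t ≤ (1 + K * δ ^ 2) * edgeSq P s t := by
  refine ⟨(3 * c + 64)⁻¹, by positivity, 3 * c + 64, by positivity, ?_⟩
  intro δ hδ hδ₀ d P hP E hE hserve s hs t ht
  have hcδ : (3 * c + 64) * δ ^ 2 ≤ 1 := by
    have : (3 * c + 64) * δ < 1 := (lt_inv_mul_iff₀ (by positivity)).1 (by rwa [mul_one])
    nlinarith
  have hspan (u v : Pt d) (huv : u ∈ P ∧ v ∈ P) :=
    exists_chainCosts_le_of_serves hP hE hc hδ.le hcδ hserve huv.1 huv.2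
  have hedge (u v : Pt d) (huv : (u, v) ∈ E ∨ (v, u) ∈ E) : u ∈ P ∧ v ∈ P :=
    huv.elim (hE _) fun h => (hE _ h).symm
  obtain ⟨x, hx, -⟩ := hspan s t ⟨hs, ht⟩
  rw [edgeSq_eq_sInf_chainCosts hs, spanDist_eq_sInf_chainCosts]
  constructor
  · simpa using sInf_chainCosts_le_mul (fun _ _ => by positivity) zero_le_one
      (fun u v huv => ⟨_, mem_chainCosts_of_rel (hedge u v huv), (one_mul _).ge⟩) ⟨x, hx⟩
  · exact sInf_chainCosts_le_mul (fun _ _ => by positivity) (by positivity) hspan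
      ⟨_, mem_chainCosts_of_rel ⟨hs, ht⟩⟩
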